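/- Let C be the 8-column, 4-row gridding matrix with entry 1 in cells (1,1), (2,3), (3,4), (4,2), (5,3), (6,1), (7,2), (8,4) (cells written as (column, row), columns left to right, rows bottom to top) and 0 elsewhere. Then the monotone grid class Grid(C) is exactly the set of permutations that avoid both 2143 and 4321 and have at most 2 descents, where a descent of a permutation σ of length n is an index i with 1 ≤ i < n and σ(i) > σ(i+1). -/

import Mathlib

/-- `σ` contains the pattern given by the (distinct) values `p : Fin k → ℕ`. -/
def Contains {n k : ℕ} (σ : Equiv.Perm (Fin n)) (p : Fin k → ℕ) : Prop :=
  ∃ f : Fin k → Fin n, StrictMono f ∧ ∀ a b : Fin k, σ (f a) < σ (f b) ↔ p a < p b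

/-- `σ` avoids the pattern `p`. -/
def Avoids {n k : ℕ} (σ : Equiv.Perm (Fin n)) (p : Fin k → ℕ) : Prop :=
  ¬ Contains σ p

/-- Position `p` lies in the cell in column `i`, row `j` determined by the
column cuts `x` and row cuts `y`. -/
def InCell {n c r : ℕ} (x : Fin (c + 1) → ℕ) (y : Fin (r + 1) → ℕ)
    (σ : Equiv.Perm (Fin n)) (i : Fin c) (j : Fin r) (p : Fin n) : Prop :=
  x i.castSucc ≤ (p : ℕ) ∧ (p : ℕ) < x i.succ ∧
    y j.castSucc ≤ ((σ p : Fin n) : ℕ) ∧ ((σ p : Fin n) : ℕ) < y j.succ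

/-- `σ` lies in the (monotone) grid class of the matrix `M`, indexed by
column (left to right) then row (bottom to top).  Entry `0` means an empty
cell, `1` an increasing cell, `-1` a decreasing cell, and `2` a point cell
(at most one point). -/
def InGrid {n c r : ℕ} (M : Fin c → Fin r → ℤ) (σ : Equiv.Perm (Fin n)) : Prop :=
  ∃ (x : Fin (c + 1) → ℕ) (y : Fin (r + 1) → ℕ),
    Monotone x ∧ Monotone y ∧
    x 0 = 0 ∧ x (Fin.last c) = n ∧ y 0 = 0 ∧ y (Fin.last r) = n ∧
    ∀ (i : Fin c) (j : Fin r),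
      (M i j = 0 → ∀ p : Fin n, ¬ InCell x y σ i j p) ∧
      (M i j = 1 → ∀ p q : Fin n,
        InCell x y σ i j p → InCell x y σ i j q → p < q → σ p < σ q) ∧
      (M i j = -1 → ∀ p q : Fin n,
        InCell x y σ i j p → InCell x y σ i j q → p < q → σ q < σ p) ∧
      (M i j = 2 → ∀ p q : Fin n,
        InCell x y σ i j p → InCell x y σ i j q → p = q)

/-- A permutation is simple if its only intervals (sets of consecutive
positions mapped to consecutive values) are singletons and the whole domain. -/
def IsSimple {n : ℕ} (σ : Equiv.Perm (Fin n)) : Prop :=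
  ∀ a b : Fin n, a ≤ b →
    (∃ c d : Fin n, (⇑σ) '' Set.Icc a b = Set.Icc c d) →
    a = b ∨ Set.Icc a b = (Set.univ : Set (Fin n))

/-- `σ` is sum-decomposable: a proper nonempty prefix of positions is mapped
to the corresponding prefix of values. -/
def SumDecomposable {n : ℕ} (σ : Equiv.Perm (Fin n)) : Prop :=
  ∃ k : ℕ, 0 < k ∧ k < n ∧ ∀ i : Fin n, ((i : ℕ) < k ↔ ((σ i : Fin n) : ℕ) < k)

/-- `σ` is skew-decomposable: a proper nonempty prefix of positions is mapped
to the corresponding suffix of values. -/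
def SkewDecomposable {n : ℕ} (σ : Equiv.Perm (Fin n)) : Prop :=
  ∃ k : ℕ, 0 < k ∧ k < n ∧ ∀ i : Fin n, ((i : ℕ) < k ↔ n - k ≤ ((σ i : Fin n) : ℕ))

/-- The number of descents of `σ`. -/
noncomputable def descentCount {n : ℕ} (σ : Equiv.Perm (Fin n)) : ℕ :=
  Nat.card {i : Fin n // ∃ j : Fin n, (j : ℕ) = (i : ℕ) + 1 ∧ σ j < σ i}

def gridC : Fin 8 → Fin 4 → ℤ :=
  ![![1, 0, 0, 0], ![0, 0, 1, 0], ![0, 0, 0, 1], ![0, 1, 0, 0],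
    ![0, 0, 1, 0], ![1, 0, 0, 0], ![0, 1, 0, 0], ![0, 0, 0, 1]]

/-!
Every cell of `C` is increasing and every column has a single nonzero entry, so a gridding
of `σ` amounts to a monotone assignment of columns to positions whose rows are monotone in the
values and under which each column carries an increasing subsequence. The columns of `C` fall
into three blocks `{1, 2, 3}`, `{4, 5}`, `{6, 7, 8}` along each of which the rows strictly
increase; hence both entries of an inversion of `σ` lie in different blocks, and `σ` is the
concatenation of three increasing runs. This gives at most two descents and no `4321`; a `2143`
is excluded by a finite check on the rows of `C`.

Conversely, split `σ` into three increasing runs `A B C`. Cut the values at the least value of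
`B`, at the least value of `A` within the range of `B`, and just above the largest value of `B`.
Then `A` avoids the second row, `B` lies in the second and third rows, and `C` avoids the third
row: an entry of `C` there would form a `2143` with that entry of `A` and the extreme entries of
`B`.
-/

open Finset

section Gridding

variable {n c r : ℕ}

lemma exists_monotone_cell_index (x : Fin (c + 1) → ℕ) (hx : Monotone x) (h0 : x 0 = 0)
    (hl : x (Fin.last c) = n) :
    ∃ f : Fin n → Fin c, Monotone f ∧
      ∀ p : Fin n, x (f p).castSucc ≤ p ∧ (p : ℕ) < x (f p).succ := by
  have hcell (p : Fin n) : ∃ i : Fin c, x i.castSucc ≤ p ∧ (p : ℕ) < x i.succ := by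
    set S : Finset (Fin (c + 1)) := {i | (p : ℕ) < x i}
    have hne : S.Nonempty := ⟨Fin.last c, by simp [S, hl]⟩
    obtain ⟨i, hi⟩ : ∃ i : Fin c, i.succ = min' _ hne := by
      refine Fin.exists_succ_eq.2 fun h => ?_
      have := min'_mem _ hne
      simp [S, h, h0] at this
    have hmem := min'_mem _ hne
    rw [← hi, mem_filter] at hmem
    refine ⟨i, not_lt.1 fun hlt => ?_, hmem.2⟩
    have := min'_le S i.castSucc (mem_filter.2 ⟨mem_univ _, hlt⟩)
    exact (Fin.castSucc_lt_succ (i := i)).not_ge (hi ▸ this)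
  choose f hf using hcell
  refine ⟨f, fun p q hpq => not_lt.1 fun hlt => ?_, hf⟩
  have := hx (Fin.succ_le_castSucc_iff.2 hlt)
  have := (hf p).1
  have := (hf q).2
  have : (p : ℕ) ≤ q := hpq
  omega

lemma lt_card_filter_lt_iff {f : Fin n → ℕ} (hf : Monotone f) (t : ℕ) (p : Fin n) :
    (p : ℕ) < #{q | f q < t} ↔ f p < t := by
  constructor
  · intro hp
    by_contra! hle
    have : #{q | f q < t} ≤ #(Iio p) :=
      card_le_card fun q hq => mem_Iio.2 <| lt_of_not_ge fun hpq =>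
        (hle.trans (hf hpq)).not_gt (mem_filter.1 hq).2
    rw [Fin.card_Iio] at this
    omega
  · intro hp
    have : #(Iic p) ≤ #{q | f q < t} :=
      card_le_card fun q hq => mem_filter.2 ⟨mem_univ q, (hf (mem_Iic.1 hq)).trans_lt hp⟩
    rw [Fin.card_Iic] at this
    omega

theorem inGrid_iff_exists_gridding (M : Fin c → Fin r → ℤ) (hM : ∀ i j, M i j = 0 ∨ M i j = 1)
    (σ : Equiv.Perm (Fin n)) :
    InGrid M σ ↔ ∃ (col : Fin n → Fin c) (row : Fin n → Fin r), Monotone col ∧ Monotone row ∧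
      (∀ p, M (col p) (row (σ p)) = 1) ∧
      ∀ p q, p < q → col p = col q → row (σ p) = row (σ q) → σ p < σ q := by
  constructor
  · rintro ⟨x, y, hx, hy, hx0, hxl, hy0, hyl, hcell⟩
    obtain ⟨col, hcol, hcolx⟩ := exists_monotone_cell_index x hx hx0 hxl
    obtain ⟨row, hrow, hrowy⟩ := exists_monotone_cell_index y hy hy0 hyl
    have hin (p : Fin n) : InCell x y σ (col p) (row (σ p)) p :=
      ⟨(hcolx p).1, (hcolx p).2, (hrowy (σ p)).1, (hrowy (σ p)).2⟩
    have hone (p : Fin n) : M (col p) (row (σ p)) = 1 :=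
      (hM _ _).resolve_left fun h => (hcell _ _).1 h p (hin p)
    refine ⟨col, row, hcol, hrow, hone, fun p q hpq hc hr => ?_⟩
    exact (hcell _ _).2.1 (hone p) p q (hin p) (hc ▸ hr ▸ hin q) hpq
  · rintro ⟨col, row, hcol, hrow, hone, hinc⟩
    have cuts_iff {k : ℕ} (f : Fin n → Fin k) (hf : Monotone f) (i : Fin k) (p : Fin n) :
        #{q | (f q : ℕ) < i.castSucc} ≤ p ∧ (p : ℕ) < #{q | (f q : ℕ) < i.succ} ↔ f p = i := by
      have hf' : Monotone fun q => (f q : ℕ) := fun a b h => hf h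
      rw [← not_lt, lt_card_filter_lt_iff hf', lt_card_filter_lt_iff hf', Fin.ext_iff]
      simp only [Fin.val_castSucc, Fin.val_succ]
      omega
    refine ⟨fun i => #{q | (col q : ℕ) < i}, fun j => #{v | (row v : ℕ) < j},
      fun i j h => card_le_card fun q => by simpa using fun hq => hq.trans_le h,
      fun i j h => card_le_card fun q => by simpa using fun hq => hq.trans_le h,
      by simp, by simp, by simp, by simp, fun i j => ?_⟩
    have hcell {p : Fin n}
        (h : InCell (fun i => #{q | (col q : ℕ) < i}) (fun j => #{v | (row v : ℕ) < j}) σ i j p) :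
        col p = i ∧ row (σ p) = j :=
      ⟨(cuts_iff col hcol i p).1 ⟨h.1, h.2.1⟩, (cuts_iff row hrow j (σ p)).1 ⟨h.2.2.1, h.2.2.2⟩⟩
    refine ⟨fun h0 p hp => ?_, fun _ p q hp hq hpq => ?_, fun h => ?_, fun h => ?_⟩
    · obtain ⟨rfl, rfl⟩ := hcell hp
      simp [hone p] at h0
    · obtain ⟨rfl, rfl⟩ := hcell hp
      obtain ⟨hc, hr⟩ := hcell hq
      exact hinc p q hpq hc.symm hr.symm
    · rcases hM i j with h' | h' <;> simp [h'] at h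
    · rcases hM i j with h' | h' <;> simp [h'] at h

end Gridding

section Descents

variable {n : ℕ} (σ : Equiv.Perm (Fin n))

def descents : Finset (Fin n) := {i | ∃ j : Fin n, (j : ℕ) = i + 1 ∧ σ j < σ i}

lemma descentCount_eq_card_descents : descentCount σ = #(descents σ) := by
  rw [descentCount, Nat.card_eq_fintype_card, Fintype.card_subtype, descents]

variable {σ}

lemma lt_of_notMem_descents {i j : Fin n} (hij : (j : ℕ) = i + 1) (hi : i ∉ descents σ) :
    σ i < σ j := by
  have hne : σ i ≠ σ j := σ.injective.ne fun h => by rw [h] at hij; omega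
  simp only [descents, mem_filter, mem_univ, true_and, not_exists, not_and, not_lt] at hi
  exact (hi j hij).lt_of_ne hne

lemma lt_of_forall_notMem_descents {p q : Fin n} (hpq : p < q)
    (h : ∀ i, p ≤ i → i < q → i ∉ descents σ) : σ p < σ q := by
  obtain ⟨d, hd⟩ : ∃ d, (q : ℕ) = p + d + 1 := ⟨q - p - 1, by have : (p : ℕ) < q := hpq; omega⟩
  induction d generalizing q with
  | zero => exact lt_of_notMem_descents hd (h p le_rfl hpq)
  | succ d ih =>
    set q' : Fin n := ⟨p + d + 1, by omega⟩
    have hpq' : p < q' := Fin.lt_def.2 (by simp [q'])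
    have hq'q : q' < q := Fin.lt_def.2 (by simp [q']; omega)
    exact (ih hpq' (fun i hp hq => h i hp (hq.trans hq'q)) rfl).trans
      (lt_of_notMem_descents (by simp [q']; omega) (h q' hpq'.le hq'q))

lemma exists_runs_of_card_descents_le {k : ℕ} (hk : #(descents σ) ≤ k) :
    ∃ g : Fin n → Fin (k + 1), Monotone g ∧ ∀ p q, p < q → g p = g q → σ p < σ q := by
  -- `g p` counts the descents before `p`
  refine ⟨fun p => ⟨#{i ∈ descents σ | i < p},
    Nat.lt_succ_of_le ((card_filter_le _ _).trans hk)⟩, fun p q hpq => ?_, fun p q hpq hg => ?_⟩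
  · show #{i ∈ descents σ | i < p} ≤ #{i ∈ descents σ | i < q}
    refine card_le_card fun i => ?_
    simpa only [mem_filter] using And.imp_right fun hi : i < p => hi.trans_le hpq
  · have hsub : {i ∈ descents σ | i < p} ⊆ {i ∈ descents σ | i < q} := fun i => by
      simpa only [mem_filter] using And.imp_right fun hi => hi.trans hpq
    have heq := eq_of_subset_of_card_le hsub (Fin.ext_iff.1 hg).ge
    refine lt_of_forall_notMem_descents hpq fun i hpi hiq hi => ?_
    have : i ∈ {i ∈ descents σ | i < p} := heq ▸ mem_filter.2 ⟨hi, hiq⟩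
    exact hpi.not_gt (mem_filter.1 this).2

lemma card_descents_le_of_runs {k : ℕ} {g : Fin n → Fin (k + 1)} (hg : Monotone g)
    (hfib : ∀ p q, p < q → g p = g q → σ p < σ q) : #(descents σ) ≤ k := by
  have hlt {i i' : Fin n} (hi : i ∈ descents σ) (hii' : i < i') : g i < g i' := by
    obtain ⟨j, hj, hσ⟩ := (mem_filter.1 hi).2
    have hij : i < j := Fin.lt_def.2 (by omega)
    have hji' : j ≤ i' := Fin.le_def.2 (by have : (i : ℕ) < i' := hii'; omega)
    exact ((hg hij.le).lt_of_ne fun h => (hfib i j hij h).not_gt hσ).trans_le (hg hji')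
  have hmaps : Set.MapsTo (fun i => (g i : ℕ)) (descents σ) (range k) := fun i hi => by
    obtain ⟨j, hj, -⟩ := (mem_filter.1 hi).2
    have : (g i : ℕ) < g j := hlt hi (Fin.lt_def.2 (by omega))
    exact mem_range.2 (by have := (g j).2; dsimp only; omega)
  have hinj : StrictMonoOn (fun i => (g i : ℕ)) (descents σ) := fun i hi i' _ h => hlt hi h
  simpa using card_le_card_of_injOn _ hmaps hinj.injOn

theorem descentCount_le_iff {k : ℕ} :
    descentCount σ ≤ k ↔ ∃ g : Fin n → Fin (k + 1), Monotone g ∧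
      ∀ p q, p < q → g p = g q → σ p < σ q := by
  rw [descentCount_eq_card_descents]
  exact ⟨exists_runs_of_card_descents_le, fun ⟨_, hg, hfib⟩ => card_descents_le_of_runs hg hfib⟩

end Descents

section Patterns

variable {n : ℕ} {σ : Equiv.Perm (Fin n)}

lemma avoids_of_strictAnti_of_fiberwise_lt {m k : ℕ} {π : Fin m → ℕ} (hπ : StrictAnti π)
    (hkm : k < m) (g : Fin n → Fin k) (hg : ∀ p q, p < q → g p = g q → σ p < σ q) :
    Avoids σ π := by
  rintro ⟨f, hf, hfπ⟩
  obtain ⟨a, b, hab, hg'⟩ := Fintype.exists_ne_map_eq_of_card_lt (g ∘ f) (by simpa using hkm)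
  rcases hab.lt_or_gt with h | h
  · exact (hπ h).not_gt ((hfπ a b).1 (hg _ _ (hf h) hg'))
  · exact (hπ h).not_gt ((hfπ b a).1 (hg _ _ (hf h) hg'.symm))

lemma contains_2143 {a b c d : Fin n} (hab : a < b) (hbc : b < c) (hcd : c < d)
    (hba : σ b < σ a) (had : σ a < σ d) (hdc : σ d < σ c) : Contains σ ![2, 1, 4, 3] := by
  refine ⟨![a, b, c, d], ?_, fun i j => ?_⟩
  · rw [Fin.strictMono_iff_lt_succ]
    intro i
    fin_cases i <;> simpa
  · simp only [Fin.lt_def] at *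
    fin_cases i <;> fin_cases j <;> simp <;> omega

end Patterns

def gridRow : Fin 8 → Fin 4 := ![0, 2, 3, 1, 2, 0, 1, 3]

def gridBlock : Fin 8 → Fin 3 := ![0, 0, 0, 1, 1, 2, 2, 2]

/-- `gridCell b r` is the column of block `b` whose row is `r`; where there is none, the value is
chosen so that `gridCell` stays monotone. -/
def gridCell : Fin 3 → Fin 4 → Fin 8 := ![![0, 0, 1, 2], ![3, 3, 4, 4], ![5, 6, 6, 7]]

lemma gridC_eq_zero_or_eq_one : ∀ i j, gridC i j = 0 ∨ gridC i j = 1 := by decide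

lemma gridC_eq_one_iff : ∀ i j, gridC i j = 1 ↔ j = gridRow i := by decide

lemma gridBlock_mono : Monotone gridBlock := by
  rw [Fin.monotone_iff_le_succ]; decide

lemma gridBlock_lt_of_lt_of_gridRow_le :
    ∀ i j, i < j → gridRow j ≤ gridRow i → gridBlock i < gridBlock j := by decide

lemma gridRow_not_2143 : ∀ a b c d : Fin 8, a < b → b ≤ c → c < d →
    gridRow b ≤ gridRow a → gridRow a ≤ gridRow d → gridRow d ≤ gridRow c → False := by decide

lemma gridCell_spec : ∀ b r, (b = 0 → r ≠ 1) → (b = 1 → r = 1 ∨ r = 2) → (b = 2 → r ≠ 2) →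
    gridBlock (gridCell b r) = b ∧ gridRow (gridCell b r) = r := by decide

lemma gridCell_le_gridCell :
    ∀ b b' r r', b < b' ∨ b = b' ∧ r ≤ r' → gridCell b r ≤ gridCell b' r' := by decide

section GridC

variable {n : ℕ} {σ : Equiv.Perm (Fin n)}

structure IsGridCGridding (σ : Equiv.Perm (Fin n)) (col : Fin n → Fin 8) : Prop where
  monotone : Monotone col
  gridRow_le : ∀ p q, σ p ≤ σ q → gridRow (col p) ≤ gridRow (col q)
  lt_of_col_eq : ∀ p q, p < q → col p = col q → σ p < σ q

theorem inGrid_gridC_iff : InGrid gridC σ ↔ ∃ col, IsGridCGridding σ col := by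
  rw [inGrid_iff_exists_gridding _ gridC_eq_zero_or_eq_one]
  constructor
  · rintro ⟨col, row, hcol, hrow, hone, hinc⟩
    have hrow_eq (p : Fin n) : row (σ p) = gridRow (col p) := (gridC_eq_one_iff _ _).1 (hone p)
    refine ⟨col, ⟨hcol, fun p q h => ?_,
      fun p q hpq h => hinc p q hpq h (by rw [hrow_eq, hrow_eq, h])⟩⟩
    rw [← hrow_eq, ← hrow_eq]
    exact hrow h
  · rintro ⟨col, hcol, hrow, hinc⟩
    refine ⟨col, fun v => gridRow (col (σ.symm v)), hcol, fun v w h => ?_, fun p => ?_,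
      fun p q hpq h _ => hinc p q hpq h⟩
    · exact hrow _ _ (by simpa using h)
    · simp [gridC_eq_one_iff]

namespace IsGridCGridding

variable {col : Fin n → Fin 8}

lemma lt_and_gridRow_le (h : IsGridCGridding σ col) {p q : Fin n} (hpq : p < q)
    (hσ : σ q < σ p) : col p < col q ∧ gridRow (col q) ≤ gridRow (col p) :=
  ⟨(h.monotone hpq.le).lt_of_ne fun hc => (h.lt_of_col_eq p q hpq hc).not_gt hσ,
    h.gridRow_le q p hσ.le⟩

lemma lt_of_gridBlock_eq (h : IsGridCGridding σ col) {p q : Fin n} (hpq : p < q)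
    (hb : gridBlock (col p) = gridBlock (col q)) : σ p < σ q := by
  refine lt_of_not_ge fun hσ => ?_
  obtain ⟨hc, hr⟩ := h.lt_and_gridRow_le hpq (hσ.lt_of_ne (σ.injective.ne hpq.ne'))
  exact (gridBlock_lt_of_lt_of_gridRow_le _ _ hc hr).ne hb

lemma avoids_2143 (h : IsGridCGridding σ col) : Avoids σ ![2, 1, 4, 3] := by
  rintro ⟨f, hf, hfπ⟩
  have hσ (a b : Fin 4) (hab : ![2, 1, 4, 3] a < ![2, 1, 4, 3] b := by decide) :
      σ (f a) < σ (f b) := (hfπ a b).2 hab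
  obtain ⟨h01, h01'⟩ := h.lt_and_gridRow_le (hf (by decide : (0 : Fin 4) < 1)) (hσ 1 0)
  obtain ⟨h23, h23'⟩ := h.lt_and_gridRow_le (hf (by decide : (2 : Fin 4) < 3)) (hσ 3 2)
  exact gridRow_not_2143 _ _ _ _ h01 (h.monotone (hf (by decide : (1 : Fin 4) < 2)).le) h23
    h01' (h.gridRow_le _ _ (hσ 0 3).le) h23'

end IsGridCGridding

end GridC

section GridCConstruction

variable {n : ℕ} {σ : Equiv.Perm (Fin n)} {g : Fin n → Fin 3}

lemma contains_2143_of_runs (hg : Monotone g) (hfib : ∀ p q, p < q → g p = g q → σ p < σ q)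
    {a b b' c : Fin n} (ha : g a = 0) (hb : g b = 1) (hb' : g b' = 1) (hc : g c = 2)
    (hba : σ b < σ a) (hac : σ a < σ c) (hcb' : σ c < σ b') : Contains σ ![2, 1, 4, 3] := by
  have hab : a < b := hg.reflect_lt (by rw [ha, hb]; decide)
  have hb'c : b' < c := hg.reflect_lt (by rw [hb', hc]; decide)
  have hbb' : b < b' := lt_of_le_of_ne
    (le_of_not_gt fun h => (hfib b' b h (hb'.trans hb.symm)).not_gt (hba.trans (hac.trans hcb')))
    fun h => (hba.trans (hac.trans hcb')).ne (congrArg σ h)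
  exact contains_2143 hab hbb' hb'c hba hac hcb'

lemma exists_value_cuts (hσ : Avoids σ ![2, 1, 4, 3]) (hg : Monotone g)
    (hfib : ∀ p q, p < q → g p = g q → σ p < σ q) :
    ∃ y₁ y₂ y₃ : ℕ, y₁ ≤ y₂ ∧ y₂ ≤ y₃ ∧ ∀ p,
      (g p = 0 → ¬ (y₁ ≤ σ p ∧ (σ p : ℕ) < y₂)) ∧ (g p = 1 → y₁ ≤ σ p ∧ (σ p : ℕ) < y₃) ∧
      (g p = 2 → ¬ (y₂ ≤ σ p ∧ (σ p : ℕ) < y₃)) := by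
  by_cases hB : ∃ b, g b = 1
  swap
  · exact ⟨0, 0, 0, le_rfl, le_rfl, fun p => ⟨by simp, fun h => (hB ⟨p, h⟩).elim, by simp⟩⟩
  have hne {p q : Fin n} (h : g p ≠ g q) : σ p ≠ σ q := fun h' => h (congrArg g (σ.injective h'))
  have hBne : ({b | g b = 1} : Finset (Fin n)).Nonempty :=
    hB.imp fun b hb => mem_filter.2 ⟨mem_univ b, hb⟩
  obtain ⟨b, hb, hbmin⟩ := exists_min_image _ σ hBne
  obtain ⟨b', hb', hb'max⟩ := exists_max_image _ σ hBne
  simp only [mem_filter, mem_univ, true_and] at hb hb' hbmin hb'max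
  have hmid (p : Fin n) (hp : g p = 1) : σ b ≤ σ p ∧ σ p ≤ σ b' := ⟨hbmin p hp, hb'max p hp⟩
  set A : Finset (Fin n) := {a | g a = 0 ∧ σ b ≤ σ a ∧ σ a ≤ σ b'}
  by_cases hA : A.Nonempty
  · obtain ⟨a, ha, hamin⟩ := exists_min_image A σ hA
    simp only [A, mem_filter, mem_univ, true_and] at ha hamin
    refine ⟨σ b, σ a, σ b' + 1, ha.2.1, by have := ha.2.2; omega, fun p => ⟨?_, ?_, ?_⟩⟩
    · rintro hp ⟨h₁, h₂⟩
      exact h₂.not_ge (hamin p ⟨hp, h₁, (Fin.lt_def.2 h₂).le.trans ha.2.2⟩)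
    · intro hp
      have := hmid p hp
      constructor <;> omega
    · rintro hp ⟨h₁, h₂⟩
      refine hσ (contains_2143_of_runs hg hfib ha.1 hb hb' hp ?_ ?_ ?_)
      · exact ha.2.1.lt_of_ne (hne (by rw [ha.1, hb]; decide))
      · exact (Fin.le_def.2 h₁).lt_of_ne (hne (by rw [ha.1, hp]; decide))
      · exact (Fin.le_def.2 (Nat.le_of_lt_succ h₂)).lt_of_ne (hne (by rw [hb', hp]; decide))
  · refine ⟨σ b, σ b' + 1, σ b' + 1, by have := hbmin b' hb'; omega, le_rfl,
      fun p => ⟨?_, ?_, ?_⟩⟩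
    · rintro hp ⟨h₁, h₂⟩
      refine hA ⟨p, ?_⟩
      simp only [A, mem_filter, mem_univ, true_and]
      exact ⟨hp, h₁, Nat.le_of_lt_succ h₂⟩
    · intro hp
      have := hmid p hp
      constructor <;> omega
    · omega

lemma exists_isGridCGridding (hσ : Avoids σ ![2, 1, 4, 3]) (hg : Monotone g)
    (hfib : ∀ p q, p < q → g p = g q → σ p < σ q) : ∃ col, IsGridCGridding σ col := by
  obtain ⟨y₁, y₂, y₃, h₁₂, h₂₃, hy⟩ := exists_value_cuts hσ hg hfib
  let row (v : Fin n) : Fin 4 :=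
    if (v : ℕ) < y₁ then 0 else if (v : ℕ) < y₂ then 1 else if (v : ℕ) < y₃ then 2 else 3
  have hrow : Monotone row := by
    intro v w hvw
    have : (v : ℕ) ≤ w := hvw
    simp only [row]
    split_ifs <;> first | decide | omega
  have hspec (p : Fin n) : gridBlock (gridCell (g p) (row (σ p))) = g p ∧
      gridRow (gridCell (g p) (row (σ p))) = row (σ p) := by
    obtain ⟨h₀, h₁, h₂⟩ := hy p
    apply gridCell_spec <;> intro hgp <;> simp only [hgp, forall_const] at h₀ h₁ h₂ <;>
      simp only [row] <;> split_ifs <;> simp <;> omega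
  refine ⟨fun p => gridCell (g p) (row (σ p)),
    ⟨fun p q hpq => ?_, fun p q h => ?_, fun p q hpq h => ?_⟩⟩
  · refine gridCell_le_gridCell _ _ _ _ ((hg hpq).lt_or_eq.imp_right fun h => ⟨h, hrow ?_⟩)
    rcases hpq.lt_or_eq with hpq | rfl
    · exact (hfib p q hpq h).le
    · rfl
  · rw [(hspec p).2, (hspec q).2]
    exact hrow h
  · exact hfib p q hpq (by rw [← (hspec p).1, ← (hspec q).1, h])

end GridCConstruction

theorem gridC_eq_av_with_at_most_two_descents :
    ∀ (n : ℕ) (σ : Equiv.Perm (Fin n)),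
      InGrid gridC σ ↔
        (Avoids σ ![2, 1, 4, 3] ∧ Avoids σ ![4, 3, 2, 1] ∧ descentCount σ ≤ 2) := by
  intro n σ
  rw [inGrid_gridC_iff]
  constructor
  · rintro ⟨col, hcol⟩
    have hfib (p q : Fin n) (hpq : p < q) (h : (gridBlock ∘ col) p = (gridBlock ∘ col) q) :
        σ p < σ q := hcol.lt_of_gridBlock_eq hpq h
    have h4321 : StrictAnti ![4, 3, 2, 1] := by
      rw [Fin.strictAnti_iff_succ_lt]
      decide
    exact ⟨hcol.avoids_2143,
      avoids_of_strictAnti_of_fiberwise_lt h4321 (by norm_num) _ hfib,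
      descentCount_le_iff.2 ⟨_, gridBlock_mono.comp hcol.monotone, hfib⟩⟩
  · rintro ⟨h2143, -, hdesc⟩
    obtain ⟨g, hg, hfib⟩ := descentCount_le_iff.1 hdesc
    exact exists_isGridCGridding h2143 hg hfib
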